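/- arXiv:1209.0664 — 4 statements merged into one kernel-verified Lean document; each statement's English description precedes it below -/
import Mathlib

section
/- Let H be a complex Hilbert space, U a strongly continuous unitary representation of ℝ^d on H, v₀ ∈ H with ‖v₀‖ = 1, and μ₀ a Borel probability measure on ℝ^d such that ⟨v₀, U(ξ)v₀⟩_H = ∫ e^{2πi ξ·g} dμ₀(g) for all ξ ∈ ℝ^d. Let ψ : ℝ^d → ℂ be continuous with compact support and such that its Fourier transform ψ̂(ξ) = ∫ e^{-2πi ξ·g} ψ(g) dg is Lebesgue integrable. Then for every γ ∈ ℝ^d, ⟨∫_{ℝ^d} ψ̂(ξ) U(ξ)v₀ dξ, U(γ)v₀⟩_H = ∫ e^{2πi γ·g} \overline{ψ(g)} dμ₀(g), where the left-hand integral is a Bochner integral with respect to Lebesgue measure. -/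
open MeasureTheory Real
open scoped InnerProductSpace RealInnerProductSpace FourierTransform ComplexConjugate

/-!
Write `ψ̂ = 𝓕 ψ`. Moving the inner product inside the Bochner integral and using
`U γ = U ξ ∘ U (γ - ξ)`, the left side becomes
`∫ conj (ψ̂ ξ) ⟪v₀, U (γ - ξ) v₀⟫ dξ = ∫∫ conj (ψ̂ ξ) e^{2πi (γ - ξ)·g} dμ₀(g) dξ`.
The integrand is bounded by `|ψ̂ ξ|` and `μ₀` is finite, so the integrals may be swapped; the
inner `ξ`-integral is then `e^{2πi γ·g}` times the conjugate of `∫ ψ̂(ξ) e^{2πi ξ·g} dξ`, which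
is `ψ g` by Fourier inversion.
-/

theorem inner_integral_left {α 𝕜 E : Type*} [MeasurableSpace α] {μ : Measure α} [RCLike 𝕜]
    [NormedAddCommGroup E] [InnerProductSpace 𝕜 E] [CompleteSpace E] [NormedSpace ℝ E]
    {F : α → E} (hF : Integrable F μ) (w : E) :
    ⟪∫ x, F x ∂μ, w⟫_𝕜 = ∫ x, ⟪F x, w⟫_𝕜 ∂μ := by
  rw [← inner_conj_symm, ← integral_inner hF, ← integral_conj]
  simp only [inner_conj_symm]

theorem inner_apply_apply_eq_inner_apply_sub {G 𝕜 E : Type*} [AddCommGroup G] [RCLike 𝕜]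
    [SeminormedAddCommGroup E] [InnerProductSpace 𝕜 E] (U : G → E ≃ₗᵢ[𝕜] E)
    (hU : ∀ s t, U (s + t) = U s * U t) (ξ γ : G) (v w : E) :
    ⟪U ξ v, U γ w⟫_𝕜 = ⟪v, U (γ - ξ) w⟫_𝕜 := by
  rw [← (U ξ).inner_map_map v, ← Function.comp_apply (f := U ξ), ← LinearIsometryEquiv.coe_mul,
    ← hU, add_sub_cancel]

section InnerProductSpace

variable {V : Type*} [NormedAddCommGroup V] [InnerProductSpace ℝ V]

theorem exp_inner_sub_eq_mul_conj (γ ξ g : V) :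
    Complex.exp (2 * π * Complex.I * (⟪γ - ξ, g⟫ : ℂ)) =
      Complex.exp (2 * π * Complex.I * (⟪γ, g⟫ : ℂ)) *
        conj (Complex.exp (2 * π * Complex.I * (⟪ξ, g⟫ : ℂ))) := by
  rw [← Complex.exp_conj, ← Complex.exp_add, inner_sub_left]
  congr 1
  simp only [map_mul, map_ofNat, Complex.conj_ofReal, Complex.conj_I]
  push_cast
  ring

theorem integral_conj_mul_integral_exp_sub [MeasurableSpace V] [BorelSpace V]
    [SecondCountableTopology V] {ν μ : Measure V} [SFinite ν] [IsFiniteMeasure μ] {f : V → ℂ}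
    (hf : Integrable f ν) (γ : V) :
    ∫ ξ, conj (f ξ) * ∫ g, Complex.exp (2 * π * Complex.I * (⟪γ - ξ, g⟫ : ℂ)) ∂μ ∂ν =
      ∫ g, Complex.exp (2 * π * Complex.I * (⟪γ, g⟫ : ℂ)) *
        conj (∫ ξ, f ξ * Complex.exp (2 * π * Complex.I * (⟪ξ, g⟫ : ℂ)) ∂ν) ∂μ := by
  have hint : Integrable (Function.uncurry fun ξ g =>
      conj (f ξ) * Complex.exp (2 * π * Complex.I * (⟪γ - ξ, g⟫ : ℂ))) (ν.prod μ) := by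
    refine (hf.norm.mul_prod (integrable_const (1 : ℝ))).mono' ?_ (ae_of_all _ fun p => ?_)
    · exact (hf.aestronglyMeasurable.star.comp_fst).mul (by fun_prop)
    · simp [Function.uncurry_def, Complex.norm_exp]
  simp only [← integral_const_mul]
  rw [integral_integral_swap hint]
  congr 1 with g
  simp only [exp_inner_sub_eq_mul_conj γ _ g, ← integral_conj, ← integral_const_mul, map_mul]
  congr 1 with ξ
  ring

section FiniteDimensional

variable [MeasurableSpace V] [BorelSpace V] [FiniteDimensional ℝ V]

theorem fourier_eq_integral_exp_mul (f : V → ℂ) (ξ : V) :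
    𝓕 f ξ = ∫ g, Complex.exp (-(2 * π * Complex.I * (⟪ξ, g⟫ : ℂ))) * f g := by
  rw [Real.fourier_eq']
  congr 1 with g
  rw [smul_eq_mul, real_inner_comm]
  push_cast
  ring_nf

theorem integral_fourier_mul_exp {f : V → ℂ} (hc : Continuous f) (hf : Integrable f)
    (hf' : Integrable (𝓕 f)) (g : V) :
    ∫ ξ, 𝓕 f ξ * Complex.exp (2 * π * Complex.I * (⟪ξ, g⟫ : ℂ)) = f g := by
  rw [← congrFun (hc.fourierInv_fourier_eq hf hf') g, Real.fourierInv_eq']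
  congr 1 with ξ
  rw [smul_eq_mul]
  push_cast
  ring_nf

end FiniteDimensional

end InnerProductSpace

theorem inner_integral_fourierTransform_smul_wandering_general {d : ℕ} {H : Type*}
    [NormedAddCommGroup H] [InnerProductSpace ℂ H] [CompleteSpace H]
    (U : EuclideanSpace ℝ (Fin d) → (H ≃ₗᵢ[ℂ] H))
    (hUadd : ∀ s t : EuclideanSpace ℝ (Fin d), U (s + t) = U s * U t)
    (hUcont : ∀ v : H, Continuous fun t : EuclideanSpace ℝ (Fin d) => U t v)
    (v₀ : H)
    (μ₀ : Measure (EuclideanSpace ℝ (Fin d))) [IsProbabilityMeasure μ₀]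
    (hμ₀ : ∀ ξ : EuclideanSpace ℝ (Fin d),
      ⟪v₀, U ξ v₀⟫_ℂ = ∫ g, Complex.exp (2 * π * Complex.I * (⟪ξ, g⟫_ℝ : ℂ)) ∂μ₀)
    (ψ : EuclideanSpace ℝ (Fin d) → ℂ) (hψc : Continuous ψ) (hψs : HasCompactSupport ψ)
    (hψhat : Integrable fun ξ : EuclideanSpace ℝ (Fin d) =>
      ∫ g, Complex.exp (-(2 * π * Complex.I * (⟪ξ, g⟫_ℝ : ℂ))) * ψ g)
    (γ : EuclideanSpace ℝ (Fin d)) :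
    ⟪∫ ξ, (∫ g, Complex.exp (-(2 * π * Complex.I * (⟪ξ, g⟫_ℝ : ℂ))) * ψ g) • (U ξ v₀),
        U γ v₀⟫_ℂ =
      ∫ g, Complex.exp (2 * π * Complex.I * (⟪γ, g⟫_ℝ : ℂ)) * (starRingEnd ℂ) (ψ g) ∂μ₀ := by
  simp only [← fourier_eq_integral_exp_mul] at hψhat ⊢
  have horbit : Integrable fun ξ => 𝓕 ψ ξ • U ξ v₀ :=
    hψhat.smul_bdd ‖v₀‖ (hUcont v₀).aestronglyMeasurable
      (ae_of_all _ fun ξ => ((U ξ).norm_map v₀).le)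
  rw [inner_integral_left horbit]
  simp only [inner_smul_left, inner_apply_apply_eq_inner_apply_sub U hUadd, hμ₀]
  rw [integral_conj_mul_integral_exp_sub hψhat]
  simp only [integral_fourier_mul_exp hψc (hψc.integrable_of_hasCompactSupport hψs) hψhat]

/-- Let `U` be a strongly continuous unitary representation of `ℝ^d` on a complex Hilbert
space `H`, `v₀` a unit vector, and `μ₀` a Borel probability measure on `ℝ^d` such that
`⟨v₀, U(ξ)v₀⟩ = ∫ e^{2πi ξ·g} dμ₀(g)` for all `ξ`.  If `ψ : ℝ^d → ℂ` is continuous with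
compact support and its Fourier transform `ψ̂(ξ) = ∫ e^{-2πi ξ·g} ψ(g) dg` is Lebesgue
integrable, then for every `γ ∈ ℝ^d`,
`⟨∫ ψ̂(ξ) U(ξ)v₀ dξ, U(γ)v₀⟩ = ∫ e^{2πi γ·g} conj(ψ(g)) dμ₀(g)`. -/
theorem inner_integral_fourierTransform_smul_wandering {d : ℕ} {H : Type*}
    [NormedAddCommGroup H] [InnerProductSpace ℂ H] [CompleteSpace H]
    (U : EuclideanSpace ℝ (Fin d) → (H ≃ₗᵢ[ℂ] H))
    (hUadd : ∀ s t : EuclideanSpace ℝ (Fin d), U (s + t) = U s * U t)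
    (hUcont : ∀ v : H, Continuous fun t : EuclideanSpace ℝ (Fin d) => U t v)
    (v₀ : H) (hv₀ : ‖v₀‖ = 1)
    (μ₀ : Measure (EuclideanSpace ℝ (Fin d))) [IsProbabilityMeasure μ₀]
    (hμ₀ : ∀ ξ : EuclideanSpace ℝ (Fin d),
      ⟪v₀, U ξ v₀⟫_ℂ = ∫ g, Complex.exp (2 * π * Complex.I * (⟪ξ, g⟫_ℝ : ℂ)) ∂μ₀)
    (ψ : EuclideanSpace ℝ (Fin d) → ℂ) (hψc : Continuous ψ) (hψs : HasCompactSupport ψ)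
    (hψhat : Integrable fun ξ : EuclideanSpace ℝ (Fin d) =>
      ∫ g, Complex.exp (-(2 * π * Complex.I * (⟪ξ, g⟫_ℝ : ℂ))) * ψ g)
    (γ : EuclideanSpace ℝ (Fin d)) :
    ⟪∫ ξ, (∫ g, Complex.exp (-(2 * π * Complex.I * (⟪ξ, g⟫_ℝ : ℂ))) * ψ g) • (U ξ v₀),
        U γ v₀⟫_ℂ =
      ∫ g, Complex.exp (2 * π * Complex.I * (⟪γ, g⟫_ℝ : ℂ)) * (starRingEnd ℂ) (ψ g) ∂μ₀ :=
  inner_integral_fourierTransform_smul_wandering_general U hUadd hUcont v₀ μ₀ hμ₀ ψ hψc hψs hψhat γ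
end

section
/- Let (U(t))_{t∈ℝ} be a strongly continuous one-parameter unitary group on a complex Hilbert space H, and let H = V₁ ⊕ ⋯ ⊕ Vₙ be an orthogonal decomposition of H into nonzero closed subspaces. Let a, b ∈ ℝ with a ≠ 0 and b ≠ 0. Suppose that U(a) permutes the subspaces {Vᵢ} and U(b) permutes the subspaces {Vᵢ}, and at least one of them permutes them non-trivially. Then a/b is rational. -/
open scoped InnerProductSpace

/-!
The times `t` at which `U t` maps every `Vᵢ` onto itself form an additive subgroup of `ℝ`
containing `N * a` and `N * b`, where `N` is the order of the symmetric group on the indices.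
If `a / b` were irrational this subgroup would be dense, and then, by strong continuity, `U t`
would map every `Vᵢ` into its closure for all `t`. But a non-trivial permutation sends some
nonzero vector of some `Vᵢ` into a different `Vⱼ`, which is orthogonal to `Vᵢ`.
-/

theorem Submodule.eq_zero_of_mem_closure_of_mem_orthogonal {𝕜 E : Type*} [RCLike 𝕜]
    [NormedAddCommGroup E] [InnerProductSpace 𝕜 E] {K : Submodule 𝕜 E} {x : E}
    (hx : x ∈ closure (K : Set E)) (hxK : x ∈ Kᗮ) : x = 0 := by
  rw [← K.topologicalClosure_coe] at hx
  rw [← K.orthogonal_closure] at hxK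
  exact Submodule.disjoint_def.mp K.topologicalClosure.orthogonal_disjoint x hx hxK

theorem apply_zero_eq_one_of_map_add {G : Type*} [Group G] {U : ℝ → G}
    (hU : ∀ s t, U (s + t) = U s * U t) : U 0 = 1 :=
  mul_eq_left.mp (by rw [← hU, add_zero] : U 0 * U 0 = U 0)

section PermutingSubspaces

variable {𝕜 E ι : Type*} [RCLike 𝕜] [NormedAddCommGroup E] [InnerProductSpace 𝕜 E]
  {U : ℝ → E ≃ₗᵢ[𝕜] E} {V : ι → Submodule 𝕜 E}

theorem map_map_of_map_add (hU : ∀ s t, U (s + t) = U s * U t) (s t : ℝ) (W : Submodule 𝕜 E) :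
    (W.map ((U t).toLinearEquiv : E →ₗ[𝕜] E)).map ((U s).toLinearEquiv : E →ₗ[𝕜] E) =
      W.map ((U (s + t)).toLinearEquiv : E →ₗ[𝕜] E) := by
  rw [hU, ← Submodule.map_comp]
  rfl

variable (U V) in
def fixingTimes (hU : ∀ s t, U (s + t) = U s * U t) : AddSubgroup ℝ where
  carrier := {t | ∀ i, (V i).map ((U t).toLinearEquiv : E →ₗ[𝕜] E) = V i}
  zero_mem' i := by
    rw [apply_zero_eq_one_of_map_add hU]
    exact Submodule.map_id _
  add_mem' {s t} hs ht i := by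
    rw [← map_map_of_map_add hU, ht, hs]
  neg_mem' {t} ht i := by
    conv_lhs => rw [← ht i]
    rw [map_map_of_map_add hU, neg_add_cancel, apply_zero_eq_one_of_map_add hU]
    exact Submodule.map_id _

theorem map_natCast_mul_of_permutes (hU : ∀ s t, U (s + t) = U s * U t) {t : ℝ}
    {σ : Equiv.Perm ι} (hσ : ∀ i, (V i).map ((U t).toLinearEquiv : E →ₗ[𝕜] E) = V (σ i))
    (k : ℕ) (i : ι) :
    (V i).map ((U (k * t)).toLinearEquiv : E →ₗ[𝕜] E) = V ((σ ^ k) i) := by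
  induction k generalizing i with
  | zero =>
    rw [Nat.cast_zero, zero_mul, apply_zero_eq_one_of_map_add hU]
    exact Submodule.map_id _
  | succ k ih =>
    rw [Nat.cast_succ, add_one_mul, ← map_map_of_map_add hU, hσ, ih, pow_succ]
    rfl

theorem card_perm_mul_mem_fixingTimes [Fintype ι] [DecidableEq ι]
    (hU : ∀ s t, U (s + t) = U s * U t) {t : ℝ} {σ : Equiv.Perm ι}
    (hσ : ∀ i, (V i).map ((U t).toLinearEquiv : E →ₗ[𝕜] E) = V (σ i)) :
    (Fintype.card (Equiv.Perm ι) : ℝ) * t ∈ fixingTimes U V hU := fun i => by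
  rw [map_natCast_mul_of_permutes hU hσ, pow_card_eq_one]
  rfl

theorem not_dense_fixingTimes (hU : ∀ s t, U (s + t) = U s * U t)
    (hUcont : ∀ v : E, Continuous fun t : ℝ => U t v) (hVne : ∀ i, V i ≠ ⊥)
    (hVorth : ∀ i j, i ≠ j → ∀ x ∈ V i, ∀ y ∈ V j, ⟪x, y⟫_𝕜 = 0) {c : ℝ} {σ : Equiv.Perm ι}
    (hσ : ∀ i, (V i).map ((U c).toLinearEquiv : E →ₗ[𝕜] E) = V (σ i)) (hσ1 : σ ≠ 1) :
    ¬Dense (fixingTimes U V hU : Set ℝ) := by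
  intro hdense
  obtain ⟨i, hi⟩ : ∃ i, σ i ≠ i := not_forall.mp fun h => hσ1 (Equiv.ext h)
  obtain ⟨v, hv, hv0⟩ := (Submodule.ne_bot_iff _).mp (hVne i)
  have hmaps : Set.MapsTo (fun t => U t v) (fixingTimes U V hU) (V i) := fun t ht => by
    rw [← ht i]
    exact Submodule.mem_map_of_mem hv
  have hclosure : U c v ∈ closure (V i : Set E) :=
    map_mem_closure (f := fun t => U t v) (hUcont v) (hdense.closure_eq ▸ Set.mem_univ c) hmaps
  have horth : U c v ∈ (V i)ᗮ := fun u hu =>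
    hVorth i (σ i) hi.symm u hu _ (hσ i ▸ Submodule.mem_map_of_mem hv)
  exact hv0 ((U c).map_eq_zero_iff.mp
    (Submodule.eq_zero_of_mem_closure_of_mem_orthogonal hclosure horth))

end PermutingSubspaces

theorem ratio_rational_of_permuting_subspaces_general {H : Type*} [NormedAddCommGroup H]
    [InnerProductSpace ℂ H]
    (U : ℝ → (H ≃ₗᵢ[ℂ] H)) (hUadd : ∀ s t : ℝ, U (s + t) = U s * U t)
    (hUcont : ∀ v : H, Continuous fun t : ℝ => U t v)
    {n : ℕ} (V : Fin n → Submodule ℂ H)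
    (hVne : ∀ i, V i ≠ ⊥)
    (hVorth : ∀ i j, i ≠ j → ∀ x ∈ V i, ∀ y ∈ V j, ⟪x, y⟫_ℂ = 0)
    {a b : ℝ}
    (σa : Equiv.Perm (Fin n))
    (hσa : ∀ i, (V i).map ((U a).toLinearEquiv : H →ₗ[ℂ] H) = V (σa i))
    (σb : Equiv.Perm (Fin n))
    (hσb : ∀ i, (V i).map ((U b).toLinearEquiv : H →ₗ[ℂ] H) = V (σb i))
    (hnontrivial : σa ≠ 1 ∨ σb ≠ 1) :
    ∃ r : ℚ, a / b = (r : ℝ) := by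
  by_contra hrat
  set N : ℝ := (Fintype.card (Equiv.Perm (Fin n)) : ℝ)
  have hirr : Irrational ((N * a) / (N * b)) := by
    rw [mul_div_mul_left a b (by positivity)]
    exact fun ⟨r, hr⟩ => hrat ⟨r, hr.symm⟩
  have hle : AddSubgroup.closure {N * a, N * b} ≤ fixingTimes U V hUadd :=
    (AddSubgroup.closure_le _).mpr <| Set.pair_subset
      (card_perm_mul_mem_fixingTimes hUadd hσa) (card_perm_mul_mem_fixingTimes hUadd hσb)
  have hdense := (dense_addSubgroupClosure_pair_iff.mpr hirr).mono hle
  rcases hnontrivial with hσa1 | hσb1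
  · exact not_dense_fixingTimes hUadd hUcont hVne hVorth hσa hσa1 hdense
  · exact not_dense_fixingTimes hUadd hUcont hVne hVorth hσb hσb1 hdense

/-- If a strongly continuous one-parameter unitary group `(U(t))_{t ∈ ℝ}` on a complex Hilbert
space `H` is such that `U(a)` and `U(b)` (with `a, b ≠ 0`) both permute the nonzero closed
subspaces of an orthogonal decomposition `H = V₁ ⊕ ⋯ ⊕ Vₙ`, at least one of them permuting
them non-trivially, then `a / b` is rational. -/
theorem ratio_rational_of_permuting_subspaces {H : Type*} [NormedAddCommGroup H]
    [InnerProductSpace ℂ H] [CompleteSpace H]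
    (U : ℝ → (H ≃ₗᵢ[ℂ] H)) (hUadd : ∀ s t : ℝ, U (s + t) = U s * U t)
    (hUcont : ∀ v : H, Continuous fun t : ℝ => U t v)
    {n : ℕ} (V : Fin n → Submodule ℂ H)
    (hVclosed : ∀ i, IsClosed (V i : Set H)) (hVne : ∀ i, V i ≠ ⊥)
    (hVorth : ∀ i j, i ≠ j → ∀ x ∈ V i, ∀ y ∈ V j, ⟪x, y⟫_ℂ = 0)
    (hVsup : (⨆ i, V i) = ⊤)
    {a b : ℝ} (ha : a ≠ 0) (hb : b ≠ 0)
    (σa : Equiv.Perm (Fin n))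
    (hσa : ∀ i, (V i).map ((U a).toLinearEquiv : H →ₗ[ℂ] H) = V (σa i))
    (σb : Equiv.Perm (Fin n))
    (hσb : ∀ i, (V i).map ((U b).toLinearEquiv : H →ₗ[ℂ] H) = V (σb i))
    (hnontrivial : σa ≠ 1 ∨ σb ≠ 1) :
    ∃ r : ℚ, a / b = (r : ℝ) :=
  ratio_rational_of_permuting_subspaces_general U hUadd hUcont V hVne hVorth σa hσa σb hσb
    hnontrivial
end

section
/- Let (U(t))_{t∈ℝ} be a strongly continuous one-parameter unitary group on a complex Hilbert space H, and let H = V₁ ⊕ ⋯ ⊕ Vₙ be an orthogonal decomposition of H into nonzero closed subspaces. Suppose D ⊆ ℝ is a dense subset such that for every t ∈ D the unitary U(t) permutes the subspaces {Vᵢ}. Then for every t ∈ ℝ and every i ∈ {1,…,n}, U(t)(Vᵢ) = Vᵢ. -/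
open scoped InnerProductSpace

/-- Let `(U(t))_{t ∈ ℝ}` be a strongly continuous one-parameter unitary group on a complex
Hilbert space `H` and let `H = V₁ ⊕ ⋯ ⊕ Vₙ` be an orthogonal decomposition into nonzero closed
subspaces.  If `D ⊆ ℝ` is dense and `U(t)` permutes the subspaces `{Vᵢ}` for every `t ∈ D`,
then `U(t)(Vᵢ) = Vᵢ` for every `t ∈ ℝ` and every `i`. -/
theorem fixes_subspaces_of_dense_permuting {H : Type*} [NormedAddCommGroup H]
    [InnerProductSpace ℂ H] [CompleteSpace H]
    (U : ℝ → (H ≃ₗᵢ[ℂ] H)) (hUadd : ∀ s t : ℝ, U (s + t) = U s * U t)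
    (hUcont : ∀ v : H, Continuous fun t : ℝ => U t v)
    {n : ℕ} (V : Fin n → Submodule ℂ H)
    (hVclosed : ∀ i, IsClosed (V i : Set H)) (hVne : ∀ i, V i ≠ ⊥)
    (hVorth : ∀ i j, i ≠ j → ∀ x ∈ V i, ∀ y ∈ V j, ⟪x, y⟫_ℂ = 0)
    (hVsup : (⨆ i, V i) = ⊤)
    (D : Set ℝ) (hD : Dense D)
    (hperm : ∀ t ∈ D, ∃ σ : Equiv.Perm (Fin n),
      ∀ i, (V i).map ((U t).toLinearEquiv : H →ₗ[ℂ] H) = V (σ i)) :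
    ∀ (t : ℝ) (i : Fin n), (V i).map ((U t).toLinearEquiv : H →ₗ[ℂ] H) = V i := by
  have hU0 : U 0 = 1 := by
    have h : U 0 * 1 = U 0 * U 0 := by
      have := (hUadd 0 0).symm
      simpa using this
    exact (mul_left_cancel h).symm
  have hmem : ∀ (t : ℝ) (i : Fin n) (x : H), x ∈ V i →
      (U t) x ∈ (V i).map ((U t).toLinearEquiv : H →ₗ[ℂ] H) := by
    intro t i x hx
    exact ⟨x, hx, rfl⟩
  -- forward inclusion for all t
  have key : ∀ (t : ℝ) (i : Fin n), ∀ w ∈ V i, (U t) w ∈ V i := by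
    intro t i
    obtain ⟨v, hv, hv0⟩ := (Submodule.ne_bot_iff _).1 (hVne i)
    set S : Set ℝ := {t : ℝ | ∀ w ∈ V i, (U t) w ∈ V i} with hSdef
    have hScl : IsClosed S := by
      have : S = ⋂ w ∈ V i, {t : ℝ | (U t) w ∈ V i} := by
        ext s; simp [hSdef]
      rw [this]
      exact isClosed_biInter fun w hw => (hVclosed i).preimage (hUcont w)
    have hSopen : IsOpen S := by
      rw [Metric.isOpen_iff]
      intro t ht
      obtain ⟨δ, hδpos, hδ⟩ := Metric.continuous_iff.1 (hUcont v) t ‖v‖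
        (norm_pos_iff.2 hv0)
      refine ⟨δ, hδpos, ?_⟩
      intro t' ht' w hw
      have hmaps : ∀ d ∈ D ∩ Metric.ball t δ, (U d) w ∈ V i := by
        rintro d ⟨hdD, hdb⟩
        obtain ⟨σ, hσ⟩ := hperm d hdD
        have hσi : σ i = i := by
          by_contra hne
          have h1 : (U d) v ∈ V (σ i) := by
            rw [← hσ i]; exact hmem d i v hv
          have h2 : (U t) v ∈ V i := ht v hv
          have hip : ⟪(U d) v, (U t) v⟫_ℂ = 0 := hVorth _ _ hne _ h1 _ h2
          have hnorm : ‖(U d) v - (U t) v‖ < ‖v‖ := by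
            have := hδ d hdb
            rwa [dist_eq_norm] at this
          have e1 : ‖(U d) v‖ = ‖v‖ := (U d).norm_map v
          have e2 : ‖(U t) v‖ = ‖v‖ := (U t).norm_map v
          have hsq : ‖(U d) v - (U t) v‖ ^ 2 = ‖v‖ ^ 2 + ‖v‖ ^ 2 := by
            rw [@norm_sub_sq ℂ, hip]
            simp [e1, e2]
          have hvpos : (0:ℝ) < ‖v‖ := norm_pos_iff.2 hv0
          nlinarith [norm_nonneg ((U d) v - (U t) v)]
        have := hmem d i w hw
        rw [hσ i, hσi] at this
        exact this
      have ht'cl : t' ∈ closure (D ∩ Metric.ball t δ) := by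
        rw [mem_closure_iff]
        intro O hO hO'
        obtain ⟨x, hx1, hx2⟩ := hD.inter_open_nonempty (O ∩ Metric.ball t δ)
          (hO.inter Metric.isOpen_ball) ⟨t', hO', ht'⟩
        exact ⟨x, hx1.1, hx2, hx1.2⟩
      have himg : (U t') w ∈ closure ((fun s => (U s) w) '' (D ∩ Metric.ball t δ)) := by
        have := image_closure_subset_closure_image (f := fun s => (U s) w) (hUcont w)
          (s := D ∩ Metric.ball t δ)
        exact this ⟨t', ht'cl, rfl⟩
      have hsub : closure ((fun s => (U s) w) '' (D ∩ Metric.ball t δ)) ⊆ (V i : Set H) := by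
        rw [← (hVclosed i).closure_eq]
        apply closure_mono
        rintro _ ⟨d, hd, rfl⟩
        exact hmaps d hd
      exact hsub himg
    have h0 : (0:ℝ) ∈ S := by
      intro w hw
      simpa [hU0] using hw
    have : S = Set.univ := (IsClopen.eq_univ ⟨hScl, hSopen⟩) ⟨0, h0⟩
    intro w hw
    have : t ∈ S := this ▸ Set.mem_univ t
    exact this w hw
  intro t i
  apply le_antisymm
  · rintro _ ⟨w, hw, rfl⟩
    exact key t i w hw
  · intro w hw
    refine ⟨(U (-t)) w, key (-t) i w hw, ?_⟩
    have hmul : U t * U (-t) = 1 := by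
      rw [← hUadd]; simp [hU0]
    have := congrArg (fun f : H ≃ₗᵢ[ℂ] H => f w) hmul
    simpa using this
end

section
/- Let n ∈ ℕ with n ≥ 3, let a ∈ ℝ with a ∉ {0, 1, …, n−2}, and set A = {0, 1, …, n−2, a} (a set with n elements). Then A is spectral if and only if a is rational and, writing a = p/q in reduced form (p ∈ ℤ, q ∈ ℕ, q ≥ 1, gcd(|p|, q) = 1), one has p + q ≡ 0 (mod n). -/
open MeasureTheory Real

/-- The uniform atomic probability measure `μ_A = (1/|A|) ∑_{a ∈ A} δ_a` on a finite set
`A ⊂ ℝ`. -/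
noncomputable def unifMeasure (A : Finset ℝ) : Measure ℝ :=
  (A.card : ENNReal)⁻¹ • ∑ a ∈ A, Measure.dirac a

/-- A finite set `A ⊂ ℝ` is spectral if there is a set `Λ ⊆ ℝ` such that the exponentials
`{e_λ : λ ∈ Λ}`, `e_λ(x) = e^{2πiλx}`, form an orthonormal basis of `L²(μ_A)`. -/
def IsSpectralFinset (A : Finset ℝ) : Prop :=
  ∃ Λ : Set ℝ, ∃ b : HilbertBasis Λ ℂ (Lp ℂ 2 (unifMeasure A)),
    ∀ l : Λ, (b l : ℝ → ℂ) =ᵐ[unifMeasure A]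
      fun x => Complex.exp (2 * π * Complex.I * (l : ℝ) * x)

/-!
By Parseval's identity for the indicator of a single point, a Hilbert basis of unimodular
functions of `L²(μ_A)` has exactly `|A|` elements; conversely, `|A|` orthonormal exponentials span
`L²(μ_A)`, whose dimension is at most `|A|`. So `A` is spectral iff some `Λ` with `|Λ| = |A|` has
all its differences in the zero set of the mask `t ↦ ∑_{x ∈ A} e(tx)`.

For `A = {0, …, n-2, a}`, `z = e(t)` and `w = e(ta)`, the mask is `w + 1 + z + ⋯ + z^(n-2)`.
Comparing it with its complex conjugate shows that it vanishes iff `z ≠ 1` and either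
`z^n = 1, wz = 1` or `z^(n-2) = 1, w = -1`. Since `n ≥ 3`, every difference of `Λ` splits through a
third point of `Λ`, and this rules out the second alternative. Hence the `e(λ - λ₀)`, `λ ∈ Λ`, are
the `n` distinct `n`-th roots of unity, and the `λ` with `e(λ - λ₀) = e(1/n)` gives
`(1/n + k)(a + 1) ∈ ℤ` for some `k ∈ ℤ`, so that `a = p/q` with `n ∣ p + q`. Conversely, for such
`a`, `Λ = {qj/n : 0 ≤ j < n}` is a spectrum.
-/

open Finset
open scoped FourierTransform

namespace unifMeasure

variable (A : Finset ℝ)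

instance : IsFiniteMeasure (unifMeasure A) := by
  rcases A.eq_empty_or_nonempty with rfl | hA
  · simp only [unifMeasure, sum_empty, smul_zero]
    infer_instance
  · exact Measure.smul_finite _ (ENNReal.inv_ne_top.2 (by simpa using hA.ne_empty))

theorem ae_iff {P : ℝ → Prop} : (∀ᵐ x ∂unifMeasure A, P x) ↔ ∀ x ∈ A, P x := by
  have hc : ((A.card : ENNReal))⁻¹ ≠ 0 := ENNReal.inv_ne_zero.2 (ENNReal.natCast_ne_top _)
  simp only [MeasureTheory.ae_iff, unifMeasure, Measure.smul_apply, smul_eq_mul, mul_eq_zero, hc,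
    false_or]
  simp only [← MeasureTheory.ae_iff, ae_finsetSum_measure_iff, ae_dirac_eq, Filter.eventually_pure]

theorem measureReal_singleton {x : ℝ} (hx : x ∈ A) :
    (unifMeasure A).real {x} = (A.card : ℝ)⁻¹ := by
  simp [unifMeasure, measureReal_def, Measure.finsetSum_apply, hx]

theorem integral_eq {E : Type*} [NormedAddCommGroup E] [NormedSpace ℝ E] [CompleteSpace E]
    (f : ℝ → E) : ∫ x, f x ∂unifMeasure A = (A.card : ℝ)⁻¹ • ∑ x ∈ A, f x := by
  rw [unifMeasure, integral_smul_measure, integral_finsetSum_measure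
    (fun x _ => (integrable_const (f x)).congr (ae_eq_dirac f).symm)]
  simp

/-- Well defined because the points of `A` are atoms of `μ_A`. -/
noncomputable def evalLp : Lp ℂ 2 (unifMeasure A) →ₗ[ℂ] (A → ℂ) where
  toFun f x := f x
  map_add' f g := funext fun x => (ae_iff A).1 (Lp.coeFn_add f g) x x.2
  map_smul' c f := funext fun x => (ae_iff A).1 (Lp.coeFn_smul c f) x x.2

theorem evalLp_injective : Function.Injective (evalLp A) := by
  refine (injective_iff_map_eq_zero _).2 fun f hf => Lp.ext ?_
  have hA : ∀ x ∈ A, f x = 0 := fun x hx => congrFun hf ⟨x, hx⟩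
  filter_upwards [(ae_iff A).2 hA, Lp.coeFn_zero ℂ 2 (unifMeasure A)] with x hx h0
  rw [h0, hx, Pi.zero_apply]

instance : FiniteDimensional ℂ (Lp ℂ 2 (unifMeasure A)) :=
  Module.Finite.of_injective _ (evalLp_injective A)

theorem finrank_Lp_le : Module.finrank ℂ (Lp ℂ 2 (unifMeasure A)) ≤ A.card := by
  simpa using LinearMap.finrank_le_finrank_of_injective (evalLp_injective A)

/-- Parseval's identity for the indicator `δ` of a point of `A`: each basis vector contributes
`|⟪δ, b i⟫|² = |A|⁻²` and `‖δ‖² = |A|⁻¹`. -/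
theorem finite_and_natCard_eq_of_hilbertBasis (hA : A.Nonempty) {ι : Type*}
    (b : HilbertBasis ι ℂ (Lp ℂ 2 (unifMeasure A)))
    (hb : ∀ i, ∀ᵐ x ∂unifMeasure A, ‖b i x‖ = 1) :
    Finite ι ∧ Nat.card ι = A.card := by
  obtain ⟨x₀, hx₀⟩ := hA
  set c : ℝ := (A.card : ℝ)⁻¹
  have hc : c ≠ 0 := inv_ne_zero (Nat.cast_ne_zero.2 (card_ne_zero_of_mem hx₀))
  let δ := indicatorConstLp 2 (measurableSet_singleton x₀) (measure_ne_top (unifMeasure A) _)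
    (1 : ℂ)
  have hδb (i : ι) : inner ℂ δ (b i) * inner ℂ (b i) δ = ((c ^ 2 : ℝ) : ℂ) := by
    rw [← inner_conj_symm (b i) δ, Complex.mul_conj', L2.inner_indicatorConstLp_one,
      integral_singleton, measureReal_singleton A hx₀, norm_smul, (ae_iff A).1 (hb i) x₀ hx₀]
    simp [c]
  have hδδ : inner ℂ δ δ = (c : ℂ) := by
    rw [L2.inner_indicatorConstLp_one_indicatorConstLp_one, Set.inter_self,
      measureReal_singleton A hx₀]
    rfl
  have hsum : HasSum (fun _ : ι => ((c ^ 2 : ℝ) : ℂ)) c := by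
    simpa only [hδb, hδδ] using b.hasSum_inner_mul_inner δ δ
  have hfin : Finite ι := by
    by_contra h
    have := not_finite_iff_infinite.1 h
    exact hc (pow_eq_zero_iff two_ne_zero |>.1 <| Complex.ofReal_eq_zero.1 <|
      (summable_const_iff _).1 hsum.summable)
  have := Fintype.ofFinite ι
  have hcard : (Fintype.card ι : ℝ) * c ^ 2 = c := by
    have := (hasSum_fintype _).unique hsum
    simp only [sum_const, card_univ, nsmul_eq_mul] at this
    exact_mod_cast this
  refine ⟨hfin, ?_⟩
  rw [Nat.card_eq_fintype_card, ← Nat.cast_inj (R := ℝ), ← inv_inv (A.card : ℝ)]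
  refine eq_inv_of_mul_eq_one_left (mul_right_cancel₀ hc ?_)
  rwa [one_mul, mul_assoc, ← pow_two]

end unifMeasure

theorem cexp_two_pi_I_mul_mul (l x : ℝ) :
    Complex.exp (2 * π * Complex.I * l * x) = 𝐞 (l * x) := by
  rw [Real.fourierChar_apply]
  push_cast
  ring_nf

theorem fourierChar_add (s t : ℝ) : (𝐞 (s + t) : ℂ) = 𝐞 s * 𝐞 t := by
  rw [AddChar.map_add_eq_mul, Circle.coe_mul]

theorem fourierChar_natCast_mul (k : ℕ) (t : ℝ) : (𝐞 (k * t) : ℂ) = 𝐞 t ^ k := by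
  rw [← nsmul_eq_mul, AddChar.map_nsmul_eq_pow, Circle.coe_pow]

theorem fourierChar_eq_one_iff {t : ℝ} : (𝐞 t : ℂ) = 1 ↔ ∃ k : ℤ, t = k := by
  rw [Circle.coe_eq_one, Real.fourierChar_apply', Circle.exp_eq_one]
  refine exists_congr fun k => ?_
  constructor <;> intro h <;> nlinarith [Real.pi_pos]

theorem fourierChar_eq_fourierChar_iff {s t : ℝ} : (𝐞 s : ℂ) = 𝐞 t ↔ ∃ k : ℤ, s = t + k := by
  rw [← div_eq_one_iff_eq (Circle.coe_ne_zero _), ← Circle.coe_div, ← AddChar.map_sub_eq_div,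
    fourierChar_eq_one_iff]
  simp only [sub_eq_iff_eq_add']

theorem memLp_fourierChar (μ : Measure ℝ) [IsFiniteMeasure μ] (l : ℝ) :
    MemLp (fun x => (𝐞 (l * x) : ℂ)) 2 μ :=
  MemLp.of_bound (by fun_prop) 1 (ae_of_all _ fun x => (Circle.norm_coe _).le)

noncomputable def fourierCharLp (μ : Measure ℝ) [IsFiniteMeasure μ] (l : ℝ) : Lp ℂ 2 μ :=
  (memLp_fourierChar μ l).toLp

theorem coeFn_fourierCharLp (μ : Measure ℝ) [IsFiniteMeasure μ] (l : ℝ) :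
    fourierCharLp μ l =ᵐ[μ] fun x => (𝐞 (l * x) : ℂ) :=
  MemLp.coeFn_toLp _

theorem inner_fourierCharLp (A : Finset ℝ) (l m : ℝ) :
    inner ℂ (fourierCharLp (unifMeasure A) l) (fourierCharLp (unifMeasure A) m) =
      (A.card : ℝ)⁻¹ • ∑ x ∈ A, (𝐞 ((m - l) * x) : ℂ) := by
  rw [L2.inner_def, ← unifMeasure.integral_eq]
  refine integral_congr_ae ?_
  filter_upwards [coeFn_fourierCharLp (unifMeasure A) l,
    coeFn_fourierCharLp (unifMeasure A) m] with x hl hm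
  rw [hl, hm, RCLike.inner_apply', Circle.starRingEnd_addChar, ← Circle.coe_mul,
    ← AddChar.map_add_eq_mul]
  ring_nf

theorem isSpectralFinset_iff {A : Finset ℝ} (hA : A.Nonempty) :
    IsSpectralFinset A ↔ ∃ Λ : Finset ℝ, Λ.card = A.card ∧
      (Λ : Set ℝ).Pairwise fun l m => ∑ x ∈ A, (𝐞 ((l - m) * x) : ℂ) = 0 := by
  have hc : (A.card : ℝ)⁻¹ ≠ 0 := inv_ne_zero (Nat.cast_ne_zero.2 hA.card_pos.ne')
  have inner_eq_zero_iff (l m : ℝ) : inner ℂ (fourierCharLp (unifMeasure A) m)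
      (fourierCharLp (unifMeasure A) l) = 0 ↔ ∑ x ∈ A, (𝐞 ((l - m) * x) : ℂ) = 0 := by
    rw [inner_fourierCharLp, smul_eq_zero, or_iff_right hc]
  have coeFn_fourierCharLp' (l : ℝ) : fourierCharLp (unifMeasure A) l =ᵐ[unifMeasure A]
      fun x => Complex.exp (2 * π * Complex.I * l * x) := by
    simpa only [cexp_two_pi_I_mul_mul] using coeFn_fourierCharLp (unifMeasure A) l
  constructor
  · rintro ⟨Λ, b, hb⟩
    have hbΛ (l : Λ) : b l = fourierCharLp (unifMeasure A) l :=
      Lp.ext <| (hb l).trans (coeFn_fourierCharLp' l).symm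
    obtain ⟨_, hcard⟩ := unifMeasure.finite_and_natCard_eq_of_hilbertBasis A hA b fun l => by
      filter_upwards [hb l] with x hx
      rw [hx, cexp_two_pi_I_mul_mul, Circle.norm_coe]
    refine ⟨(Set.toFinite Λ).toFinset, ?_, fun l hl m hm hlm => ?_⟩
    · rwa [← Set.ncard_eq_toFinset_card Λ, ← Nat.card_coe_set_eq]
    · rw [Set.Finite.coe_toFinset] at hl hm
      rw [← inner_eq_zero_iff, ← hbΛ ⟨m, hm⟩, ← hbΛ ⟨l, hl⟩]
      exact b.orthonormal.inner_eq_zero fun h => hlm (congrArg Subtype.val h).symm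
  · rintro ⟨Λ, hcard, hΛ⟩
    have hon : Orthonormal ℂ fun l : Λ => fourierCharLp (unifMeasure A) l := by
      refine ⟨fun l => ?_, fun l m hlm => (inner_eq_zero_iff m l).2 ?_⟩
      · rw [@norm_eq_sqrt_re_inner ℂ, inner_fourierCharLp]
        simp [hA.card_pos.ne']
      · exact hΛ m.2 l.2 fun h => hlm (Subtype.ext h.symm)
    have hspan : Submodule.span ℂ (Set.range fun l : Λ => fourierCharLp (unifMeasure A) l) = ⊤ :=
      hon.linearIndependent.span_eq_top_of_card_eq_finrank' <|
        le_antisymm hon.linearIndependent.fintype_card_le_finrank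
          (by simpa [hcard] using unifMeasure.finrank_Lp_le A)
    refine ⟨Λ, HilbertBasis.mk hon (by rw [hspan]; exact Submodule.le_topologicalClosure ⊤),
      fun l => ?_⟩
    rw [HilbertBasis.coe_mk]
    exact coeFn_fourierCharLp' l

theorem add_geom_sum_eq_zero_iff {z w : ℂ} (hz : ‖z‖ = 1) (hw : ‖w‖ = 1) {m : ℕ} (hm : 1 ≤ m) :
    w + ∑ k ∈ range (m + 1), z ^ k = 0 ↔
      z ≠ 1 ∧ ((z ^ (m + 2) = 1 ∧ w * z = 1) ∨ (z ^ m = 1 ∧ w = -1)) := by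
  have hz0 : z ≠ 0 := norm_ne_zero_iff.1 (hz.trans_ne one_ne_zero)
  have hw0 : w ≠ 0 := norm_ne_zero_iff.1 (hw.trans_ne one_ne_zero)
  have hgeom := geom_sum_mul z (m + 1)
  constructor
  · intro h
    have hz1 : z ≠ 1 := by
      rintro rfl
      have : w = -(m + 1 : ℝ) := by push_cast; simpa [add_eq_zero_iff_eq_neg] using h
      rw [this, norm_neg, Complex.norm_real, Real.norm_of_nonneg (by positivity)] at hw
      have : (1 : ℝ) ≤ m := by exact_mod_cast hm
      linarith
    have h₁ : w * (z - 1) = 1 - z ^ (m + 1) := by linear_combination (z - 1) * h - hgeom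
    have h₂ : w⁻¹ * (z⁻¹ - 1) = 1 - z⁻¹ ^ (m + 1) := by
      simpa [Complex.inv_eq_conj hz, Complex.inv_eq_conj hw] using congrArg (starRingEnd ℂ) h₁
    rw [inv_pow] at h₂
    field_simp at h₂
    -- eliminate `w` between `h₁` and its conjugate `h₂`
    have key : (z ^ (m + 2) - 1) * (z ^ m - 1) = 0 := mul_left_cancel₀ hz0 <| by
      linear_combination z * (z ^ (m + 1) - 1) * h₁ + (z - 1) * h₂
    have hz1' : z - 1 ≠ 0 := sub_ne_zero.2 hz1
    refine ⟨hz1, (mul_eq_zero.1 key).imp (fun h => ⟨sub_eq_zero.1 h, ?_⟩)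
      (fun h => ⟨sub_eq_zero.1 h, ?_⟩)⟩
    · refine sub_eq_zero.1 ((mul_eq_zero.1 (?_ : (w * z - 1) * (z - 1) = 0)).resolve_right hz1')
      linear_combination z * h₁ - h
    · refine eq_neg_of_add_eq_zero_left
        ((mul_eq_zero.1 (?_ : (w + 1) * (z - 1) = 0)).resolve_right hz1')
      linear_combination h₁ - z * h
  · rintro ⟨hz1, ⟨hzm, hwz⟩ | ⟨hzm, hw1⟩⟩ <;>
    refine (mul_eq_zero.1 (?_ : (w + ∑ k ∈ range (m + 1), z ^ k) * ((z - 1) * z) = 0))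
      |>.resolve_right (mul_ne_zero (sub_ne_zero.2 hz1) hz0)
    · linear_combination z * hgeom + (z - 1) * hwz + hzm
    · linear_combination z * hgeom + z ^ 2 * hzm + (z - 1) * z * hw1

theorem sum_fourierChar_insert_range_eq_zero_iff {m : ℕ} (hm : 1 ≤ m) {a : ℝ}
    (ha : a ∉ (range (m + 1)).image ((↑) : ℕ → ℝ)) (t : ℝ) :
    ∑ x ∈ insert a ((range (m + 1)).image ((↑) : ℕ → ℝ)), (𝐞 (t * x) : ℂ) = 0 ↔
      (𝐞 t : ℂ) ≠ 1 ∧ (((𝐞 t : ℂ) ^ (m + 2) = 1 ∧ (𝐞 (t * a) : ℂ) * 𝐞 t = 1) ∨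
        ((𝐞 t : ℂ) ^ m = 1 ∧ (𝐞 (t * a) : ℂ) = -1)) := by
  rw [sum_insert ha, sum_image fun _ _ _ _ h => Nat.cast_injective h]
  simp_rw [mul_comm t (Nat.cast _), fourierChar_natCast_mul]
  exact add_geom_sum_eq_zero_iff (Circle.norm_coe _) (Circle.norm_coe _) hm

section IsMaskZero

variable {R : Type*} [CommRing R] {n : ℕ}

/-- The condition on `z = e(t)`, `w = e(ta)` for `t` to be a zero of the mask of
`{0, …, n - 2, a}`, with `z ^ (n - 2) = 1` dropped from the second alternative. -/
def IsMaskZero (n : ℕ) (z w : R) : Prop :=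
  z ≠ 1 ∧ ((z ^ n = 1 ∧ w * z = 1) ∨ w = -1)

theorem IsMaskZero.ne_one_right (hR : (-1 : R) ≠ 1) {z w : R} (h : IsMaskZero n z w) :
    w ≠ 1 := by
  rintro rfl
  rcases h with ⟨hz, ⟨-, h⟩ | h⟩
  · exact hz (by simpa using h)
  · exact hR h.symm

/-- If `w₁ w₂ = -1` then one of `w₁, w₂` is `-1` and the other is `1`, which is impossible. -/
theorem IsMaskZero.pow_eq_one_and_mul_eq_one (hR : (-1 : R) ≠ 1) {z₁ z₂ w₁ w₂ : R}
    (h₁ : IsMaskZero n z₁ w₁) (h₂ : IsMaskZero n z₂ w₂) (h : IsMaskZero n (z₁ * z₂) (w₁ * w₂)) :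
    (z₁ * z₂) ^ n = 1 ∧ w₁ * w₂ * (z₁ * z₂) = 1 := by
  rcases h.2 with h | hw
  · exact h
  rcases h₁.2 with ⟨hz₁, hwz₁⟩ | hw₁
  · rcases h₂.2 with ⟨hz₂, hwz₂⟩ | hw₂
    · exact ⟨by rw [mul_pow, hz₁, hz₂, one_mul], by linear_combination w₂ * z₂ * hwz₁ + hwz₂⟩
    · exact absurd (by linear_combination -hw + w₁ * hw₂) (h₁.ne_one_right hR)
  · exact absurd (by linear_combination -hw + w₂ * hw₁) (h₂.ne_one_right hR)

end IsMaskZero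

theorem pow_eq_one_and_mul_eq_one_of_pairwise {n : ℕ} {a : ℝ} {Λ : Finset ℝ} (hΛ : 3 ≤ Λ.card)
    (h : (Λ : Set ℝ).Pairwise fun l m => IsMaskZero n (𝐞 (l - m) : ℂ) (𝐞 ((l - m) * a))) :
    ∀ l ∈ Λ, ∀ m ∈ Λ, (𝐞 (l - m) : ℂ) ^ n = 1 ∧ (𝐞 ((l - m) * a) : ℂ) * 𝐞 (l - m) = 1 := by
  intro l hl m hm
  rcases eq_or_ne l m with rfl | hlm
  · simp
  obtain ⟨k, hk, hklm⟩ := exists_mem_notMem_of_card_lt_card (s := {l, m})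
    (card_le_two.trans_lt hΛ)
  simp only [mem_insert, mem_singleton, not_or] at hklm
  have := (h hl hk (Ne.symm hklm.1)).pow_eq_one_and_mul_eq_one (by norm_num) (h hk hm hklm.2)
  rw [← fourierChar_add, ← fourierChar_add, ← add_mul, sub_add_sub_cancel] at this
  exact this (h hl hm hlm)

theorem exists_fourierChar_sub_eq {n : ℕ} {Λ : Finset ℝ} (hΛ : Λ.card = n)
    (h₁ : (Λ : Set ℝ).Pairwise fun l m => (𝐞 (l - m) : ℂ) ≠ 1)
    (h₂ : ∀ l ∈ Λ, ∀ m ∈ Λ, (𝐞 (l - m) : ℂ) ^ n = 1) {l₀ : ℝ} (hl₀ : l₀ ∈ Λ) {ζ : ℂ}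
    (hζ : ζ ^ n = 1) : ∃ l ∈ Λ, (𝐞 (l - l₀) : ℂ) = ζ := by
  classical
  have hn : 0 < n := hΛ ▸ card_pos.2 ⟨l₀, hl₀⟩
  have hinj : Set.InjOn (fun l => (𝐞 (l - l₀) : ℂ)) Λ := by
    intro l hl m hm hlm
    by_contra hne
    refine h₁ hl hm hne ?_
    rw [← sub_sub_sub_cancel_right l m l₀, AddChar.map_sub_eq_div, Circle.coe_div]
    exact div_eq_one_iff_eq (Circle.coe_ne_zero _) |>.2 hlm
  have himage : Λ.image (fun l => (𝐞 (l - l₀) : ℂ)) = Polynomial.nthRootsFinset n (1 : ℂ) := by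
    refine eq_of_subset_of_card_le (fun z hz => ?_) ?_
    · obtain ⟨l, hl, rfl⟩ := mem_image.1 hz
      exact (Polynomial.mem_nthRootsFinset hn 1).2 (h₂ l hl l₀ hl₀)
    · rw [card_image_of_injOn hinj, hΛ,
        (Complex.isPrimitiveRoot_exp n hn.ne').card_nthRootsFinset]
  exact mem_image.1 (himage ▸ (Polynomial.mem_nthRootsFinset hn 1).2 hζ)

theorem Rat.dvd_num_add_den {r : ℚ} {n i j : ℤ} (hni : IsCoprime n i)
    (h : (r + 1) * i = j * n) : n ∣ r.num + r.den := by
  have h' : (r.num + r.den) * i = j * r.den * n := by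
    have : ((r.num + r.den : ℤ) : ℚ) * i = (j * r.den * n : ℤ) := by
      push_cast
      rw [← Rat.mul_den_eq_num]
      linear_combination (r.den : ℚ) * h
    exact_mod_cast this
  exact hni.dvd_of_dvd_mul_right ⟨j * r.den, by rw [h']; ring⟩

theorem exists_num_den_of_mul_eq {n : ℕ} (hn : 2 ≤ n) {a : ℝ} {k j : ℤ}
    (h : (1 / n + k) * (a + 1) = j) :
    ∃ (p : ℤ) (q : ℕ), 1 ≤ q ∧ Nat.Coprime p.natAbs q ∧ a = p / q ∧ (n : ℤ) ∣ p + q := by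
  have hi : (1 + k * n : ℤ) ≠ 0 := by
    intro hi
    have := Int.eq_one_of_dvd_one (by positivity)
      (show (n : ℤ) ∣ 1 from ⟨-k, by linear_combination hi⟩)
    omega
  have hiR : (1 + k * n : ℝ) ≠ 0 := by exact_mod_cast hi
  have hiQ : (1 + k * n : ℚ) ≠ 0 := by exact_mod_cast hi
  set r : ℚ := j * n / (1 + k * n) - 1
  have har : a = r := by
    have hn0 : (n : ℝ) ≠ 0 := by positivity
    simp only [r]
    push_cast
    rw [eq_sub_iff_add_eq, eq_div_iff hiR]
    field_simp at h
    linear_combination h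
  refine ⟨r.num, r.den, r.pos, r.reduced, by rw [har, Rat.cast_def], Rat.dvd_num_add_den
    (j := j) (isCoprime_one_right.add_mul_right_right k) ?_⟩
  push_cast
  rw [sub_add_cancel, div_mul_cancel₀ _ hiQ]

theorem exists_num_den_of_pairwise_isMaskZero {n : ℕ} (hn : 3 ≤ n) {a : ℝ} {Λ : Finset ℝ}
    (hΛ : Λ.card = n)
    (h : (Λ : Set ℝ).Pairwise fun l m => IsMaskZero n (𝐞 (l - m) : ℂ) (𝐞 ((l - m) * a))) :
    ∃ (p : ℤ) (q : ℕ), 1 ≤ q ∧ Nat.Coprime p.natAbs q ∧ a = p / q ∧ (n : ℤ) ∣ p + q := by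
  have hI := pow_eq_one_and_mul_eq_one_of_pairwise (hΛ ▸ hn) h
  obtain ⟨l₀, hl₀⟩ := card_pos.1 (by omega : 0 < Λ.card)
  have hζ : (𝐞 (1 / n) : ℂ) ^ n = 1 := by
    rw [← fourierChar_natCast_mul, mul_one_div_cancel (by positivity)]
    exact fourierChar_eq_one_iff.2 ⟨1, Int.cast_one.symm⟩
  obtain ⟨l, hl, hlζ⟩ := exists_fourierChar_sub_eq hΛ (fun l hl m hm hlm => (h hl hm hlm).1)
    (fun l hl m hm => (hI l hl m hm).1) hl₀ hζ
  obtain ⟨k, hk⟩ := fourierChar_eq_fourierChar_iff.1 hlζ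
  obtain ⟨j, hj⟩ := (fourierChar_eq_one_iff (t := (l - l₀) * (a + 1))).1 <| by
    rw [mul_add_one, fourierChar_add]
    exact (hI l hl l₀ hl₀).2
  exact exists_num_den_of_mul_eq (by omega) (hk ▸ hj)

theorem exists_finset_pairwise_of_dvd {n : ℕ} {a : ℝ} {p : ℤ} {q : ℕ} (hq : 1 ≤ q)
    (hpq : Nat.Coprime p.natAbs q) (ha : a = p / q) (hdvd : (n : ℤ) ∣ p + q) :
    ∃ Λ : Finset ℝ, Λ.card = n ∧ (Λ : Set ℝ).Pairwise fun l m => (𝐞 (l - m) : ℂ) ≠ 1 ∧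
      (𝐞 (l - m) : ℂ) ^ n = 1 ∧ (𝐞 ((l - m) * a) : ℂ) * 𝐞 (l - m) = 1 := by
  have hnq : IsCoprime (n : ℤ) q := by
    refine IsCoprime.of_isCoprime_of_dvd_left ?_ hdvd
    simpa using (Int.isCoprime_iff_nat_coprime.2 (by simpa using hpq)).add_mul_left_left (1 : ℤ)
  obtain ⟨s, hs⟩ := hdvd
  have hq0 : (q : ℝ) ≠ 0 := by positivity
  have not_int {j j' : ℕ} (hj : j < n) (hj' : j' < n) (hne : j ≠ j') (k : ℤ) :
      (q * j / n - q * j' / n : ℝ) ≠ k := by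
    intro hk
    have hn0 : (n : ℝ) ≠ 0 := by norm_cast; omega
    have : (n : ℤ) ∣ q * ((j : ℤ) - j') := ⟨k, by field_simp at hk; exact_mod_cast hk⟩
    refine hne (by exact_mod_cast sub_eq_zero.1 (Int.eq_zero_of_abs_lt_dvd
      (hnq.dvd_of_dvd_mul_left this) (abs_sub_lt_iff.2 ⟨by omega, by omega⟩)))
  classical
  refine ⟨(range n).image fun j : ℕ => (q * j / n : ℝ),
    (card_image_of_injOn fun j hj j' hj' h => ?_).trans (card_range n), ?_⟩
  · by_contra hne
    exact not_int (mem_range.1 hj) (mem_range.1 hj') hne 0 (by simpa [sub_eq_zero] using h)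
  rintro _ hl _ hm hlm
  obtain ⟨j, hj, rfl⟩ := mem_image.1 hl
  obtain ⟨j', hj', rfl⟩ := mem_image.1 hm
  have hne : j ≠ j' := by rintro rfl; exact hlm rfl
  have hn0 : (n : ℝ) ≠ 0 := by have := mem_range.1 hj; norm_cast; omega
  refine ⟨fun h => ?_, ?_, ?_⟩
  · obtain ⟨k, hk⟩ := fourierChar_eq_one_iff.1 h
    exact not_int (mem_range.1 hj) (mem_range.1 hj') hne k hk
  · rw [← fourierChar_natCast_mul]
    refine fourierChar_eq_one_iff.2 ⟨q * j - q * j', ?_⟩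
    push_cast
    field_simp
  · rw [← fourierChar_add, ← mul_add_one]
    refine fourierChar_eq_one_iff.2 ⟨s * (j - j'), ?_⟩
    have hs' : (p + q : ℝ) = n * s := by exact_mod_cast hs
    rw [ha]
    field_simp
    push_cast
    linear_combination (j - j' : ℝ) * hs'

/-- Let `n ≥ 3` and let `a ∈ ℝ` with `a ∉ {0, 1, …, n-2}`.  The set
`A = {0, 1, …, n-2, a}` is spectral if and only if `a` is rational and, writing `a = p/q` in
reduced form, `p + q ≡ 0 (mod n)`. -/
theorem isSpectral_insert_range_iff (n : ℕ) (hn : 3 ≤ n) (a : ℝ)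
    (ha : ∀ k ∈ Finset.range (n - 1), a ≠ (k : ℝ)) :
    IsSpectralFinset (insert a ((Finset.range (n - 1)).image ((↑) : ℕ → ℝ))) ↔
      ∃ (p : ℤ) (q : ℕ), 1 ≤ q ∧ Nat.Coprime p.natAbs q ∧ a = (p : ℝ) / (q : ℝ) ∧
        (n : ℤ) ∣ p + (q : ℤ) := by
  obtain ⟨m, rfl⟩ : ∃ m, n = m + 2 := ⟨n - 2, by omega⟩
  have haA : a ∉ (range (m + 1)).image ((↑) : ℕ → ℝ) := by
    simpa using fun k hk => (ha k hk).symm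
  rw [show m + 2 - 1 = m + 1 from rfl, isSpectralFinset_iff (insert_nonempty _ _),
    card_insert_of_notMem haA, card_image_of_injective _ Nat.cast_injective, card_range]
  simp_rw [sum_fourierChar_insert_range_eq_zero_iff (by omega) haA]
  constructor
  · rintro ⟨Λ, hΛ, h⟩
    exact exists_num_den_of_pairwise_isMaskZero hn hΛ
      (h.mono' fun l m h => ⟨h.1, h.2.imp_right And.right⟩)
  · rintro ⟨p, q, hq, hpq, ha, hdvd⟩
    obtain ⟨Λ, hΛ, h⟩ := exists_finset_pairwise_of_dvd hq hpq ha hdvd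
    exact ⟨Λ, hΛ, h.mono' fun l m h => ⟨h.1, Or.inl h.2⟩⟩
end
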